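/- Let X be a locally compact complete separable metric space equipped with a Borel probability measure ν. Then for any Borel probability measure μ on X, H(μ|ν) = sup { ∫ φ dμ − log ∫ e^φ dν : φ ∈ C_b(X) }, where C_b(X) is the space of bounded continuous real functions on X. Moreover, the supremum is unchanged when restricted to those φ ∈ C_b(X) satisfying ∫ e^φ dν = 1. -/

import Mathlib

open MeasureTheory ProbabilityTheory Filter Set Classical
open scoped ENNReal NNReal Topology BigOperators

noncomputable section

/-- The uniform (rotation-invariant) probability measure on the sphere of radius `r`
in `ℝ^N`, realized as the pushforward of the standard Gaussian under radial projection. -/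
def uniformSphere (N : ℕ) (r : ℝ) : Measure (Fin N → ℝ) :=
  Measure.map (fun x => (r / Real.sqrt (∑ i, x i ^ 2)) • x)
    (Measure.pi fun _ : Fin N => gaussianReal 0 1)

/-- `σ^N`, the uniform probability measure on `S^{N-1}(√N)`. -/
def sigmaN (N : ℕ) : Measure (Fin N → ℝ) := uniformSphere N (Real.sqrt N)

/-- `Z_N(f,r) = ∫_{S^{N-1}(r)} f^{⊗N} dσ^N_r`. -/
def ZN (N : ℕ) (f : ℝ → ℝ) (r : ℝ) : ℝ :=
  ∫ v, (∏ i, f (v i)) ∂(uniformSphere N r)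

/-- Relative entropy `H(μ|ν)`, valued in `ℝ≥0∞`. -/
def relEntropy {α : Type*} [MeasurableSpace α] (μ ν : Measure α) : ℝ≥0∞ :=
  if μ ≪ ν ∧ Integrable (fun x => Real.log (μ.rnDeriv ν x).toReal) μ then
    ENNReal.ofReal (∫ x, Real.log (μ.rnDeriv ν x).toReal ∂μ)
  else ⊤

/-- The measure `f(v) dv` on `ℝ`. -/
def densityMeasure (f : ℝ → ℝ) : Measure ℝ :=
  volume.withDensity fun v => ENNReal.ofReal (f v)

/-- The conditioned product measure `[μ^{⊗N}]_{S^{N-1}(√N)}`. -/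
def condProd (f : ℝ → ℝ) (N : ℕ) : Measure (Fin N → ℝ) :=
  (sigmaN N).withDensity fun v =>
    ENNReal.ofReal ((∏ i, f (v i)) / ZN N f (Real.sqrt N))

/-- Projection to the first `k` coordinates (junk value `0` if `N < k`). -/
def projFun (N k : ℕ) (v : Fin N → ℝ) : Fin k → ℝ :=
  fun i => if h : (i : ℕ) < N then v ⟨i, h⟩ else 0

/-- `P_k μ`, the marginal on the first `k` coordinates. -/
def marginal (N k : ℕ) (μ : Measure (Fin N → ℝ)) : Measure (Fin k → ℝ) :=
  Measure.map (projFun N k) μ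

/-- The rotation `R_{i,j,θ}` in the `(v_i,v_j)`-plane. -/
def kacRot (N : ℕ) (i j : Fin N) (θ : ℝ) (v : Fin N → ℝ) : Fin N → ℝ :=
  Function.update (Function.update v i (Real.cos θ * v i - Real.sin θ * v j)) j
    (Real.sin θ * v i + Real.cos θ * v j)

/-- The Kac transition operator `Q_N`. -/
def kacQ (N : ℕ) (φ : (Fin N → ℝ) → ℝ) (v : Fin N → ℝ) : ℝ :=
  ((N : ℝ) * ((N : ℝ) - 1) / 2)⁻¹ *
    ∑ p ∈ Finset.univ.filter (fun p : Fin N × Fin N => p.1 < p.2),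
      (1 / (2 * Real.pi)) * ∫ θ in (0:ℝ)..(2 * Real.pi), φ (kacRot N p.1 p.2 θ v)

/-- The Kac generator `L_N = N (Q_N - I)`. -/
def kacL (N : ℕ) (φ : (Fin N → ℝ) → ℝ) (v : Fin N → ℝ) : ℝ :=
  (N : ℝ) * (kacQ N φ v - φ v)

/-- The standard Gaussian density `γ` on `ℝ`. -/
def gaussDens (v : ℝ) : ℝ := Real.exp (-(v ^ 2) / 2) / Real.sqrt (2 * Real.pi)

/-- The Maxwellian density `M_a` of variance `a`. -/
def maxwellian (a : ℝ) (v : ℝ) : ℝ :=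
  Real.exp (-(v ^ 2) / (2 * a)) / Real.sqrt (2 * Real.pi * a)

/-- The Wild convolution `f ∘ g`. -/
def wild (f g : ℝ → ℝ) (v : ℝ) : ℝ :=
  (1 / (2 * Real.pi)) *
    ∫ vs : ℝ, ∫ θ in (0:ℝ)..(2 * Real.pi),
      f (v * Real.cos θ - vs * Real.sin θ) * g (v * Real.sin θ + vs * Real.cos θ)

/-- `α_N(u) = u^{N/2-1} e^{-u/2}`. -/
def alphaN (N : ℕ) (u : ℝ) : ℝ := u ^ ((N : ℝ) / 2 - 1) * Real.exp (-u / 2)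

/-- `γ^{(N)}(r) = e^{-r²/2}/(2π)^{N/2}`. -/
def gammaDensN (N : ℕ) (r : ℝ) : ℝ :=
  Real.exp (-(r ^ 2) / 2) / (2 * Real.pi) ^ ((N : ℝ) / 2)

/-- `Z'_N(f,r) = ∫_{S^{N-1}(r)} (f/γ)^{⊗N} dσ^N_r`. -/
def ZN' (N : ℕ) (f : ℝ → ℝ) (r : ℝ) : ℝ :=
  ∫ v, (∏ i, f (v i) / gaussDens (v i)) ∂(uniformSphere N r)



/-!
Write `f = dμ/dν` and `DV(φ) = ∫ φ dμ - log ∫ e^φ dν`. The bound `DV(φ) ≤ H(μ|ν)` is Gibbs'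
inequality for `μ` against the tilted measure `e^φ ν / ∫ e^φ dν`. Conversely, `log z ≤ z - 1`
gives `DV(φ) ≥ ∫ (f φ - e^φ + 1) dν`; for `φ` the logarithm of `f` clamped to `[e^{-n}, e^n]`
this integrand is nonnegative and tends to `f log f - f + 1`, whose `ν`-integral is `H(μ|ν)`, so
Fatou's lemma gives the reverse bound. If `μ` is not absolutely continuous with respect to `ν`,
multiples of the indicator of a `ν`-null set charged by `μ` make `DV` unbounded. Bounded
measurable test functions are replaced by bounded continuous ones through `(μ + ν)`-a.e.
approximation, clamped to the same bound, and dominated convergence. Subtracting the constant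
`log ∫ e^φ dν` from `φ` normalises `∫ e^φ dν = 1` without changing `DV(φ)`.
-/

namespace DonskerVaradhan

open Real InformationTheory
open scoped BoundedContinuousFunction

variable {α : Type*} [MeasurableSpace α] {μ ν : Measure α}

def dvFunctional (μ ν : Measure α) (φ : α → ℝ) : ℝ :=
  ∫ x, φ x ∂μ - log (∫ x, exp (φ x) ∂ν)

lemma relEntropy_eq_klDiv [IsProbabilityMeasure μ] [IsProbabilityMeasure ν] :
    relEntropy μ ν = klDiv μ ν := by
  rw [relEntropy, klDiv_def]
  simp only [probReal_univ, add_sub_cancel_right]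
  rfl

lemma integrable_exp_of_abs_le [IsFiniteMeasure μ] {φ : α → ℝ} (hφ : AEStronglyMeasurable φ μ)
    {C : ℝ} (hC : ∀ x, |φ x| ≤ C) : Integrable (fun x ↦ exp (φ x)) μ :=
  .of_bound (continuous_exp.comp_aestronglyMeasurable hφ) (exp C) <| ae_of_all _ fun x ↦ by
    simpa only [norm_eq_abs, abs_exp] using exp_le_exp.2 (le_of_abs_le (hC x))

lemma ofReal_dvFunctional_le_klDiv [IsProbabilityMeasure μ] [IsProbabilityMeasure ν]
    {φ : α → ℝ} (hφμ : Integrable φ μ) (hφν : Integrable (fun x ↦ exp (φ x)) ν) :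
    ENNReal.ofReal (dvFunctional μ ν φ) ≤ klDiv μ ν := by
  by_cases h : μ ≪ ν ∧ Integrable (llr μ ν) μ
  · obtain ⟨hμν, hllr⟩ := h
    have := isProbabilityMeasure_tilted hφν
    have gibbs := integral_llr_add_sub_measure_univ_nonneg
      (hμν.trans (absolutelyContinuous_tilted hφν)) (integrable_llr_tilted_right hμν hφμ hllr hφν)
    rw [integral_llr_tilted_right hμν hφμ hφν hllr] at gibbs
    rw [klDiv_of_ac_of_integrable hμν hllr]
    refine ENNReal.ofReal_le_ofReal ?_
    simp only [probReal_univ] at gibbs ⊢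
    rw [dvFunctional]
    linarith
  · rw [klDiv_eq_top_iff.2 fun hμν hllr ↦ h ⟨hμν, hllr⟩]
    exact le_top

lemma dvFunctional_sub_const [IsProbabilityMeasure μ] [NeZero ν] {φ : α → ℝ} (hφμ : Integrable φ μ)
    (hφν : Integrable (fun x ↦ exp (φ x)) ν) (c : ℝ) :
    dvFunctional μ ν (fun x ↦ φ x - c) = dvFunctional μ ν φ := by
  simp only [dvFunctional, exp_sub, integral_div, integral_sub hφμ (integrable_const c),
    integral_const, probReal_univ, one_smul]
  rw [log_div (integral_exp_pos hφν).ne' (exp_pos c).ne', log_exp]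
  ring

lemma integral_exp_sub_log_integral_exp [NeZero ν] {φ : α → ℝ}
    (hφν : Integrable (fun x ↦ exp (φ x)) ν) :
    ∫ x, exp (φ x - log (∫ x, exp (φ x) ∂ν)) ∂ν = 1 := by
  simp only [exp_sub, integral_div, exp_log (integral_exp_pos hφν)]
  exact div_self (integral_exp_pos hφν).ne'

lemma integrable_exp_boundedContinuousFunction [TopologicalSpace α] [OpensMeasurableSpace α]
    [IsFiniteMeasure μ] (g : α →ᵇ ℝ) : Integrable (fun x ↦ exp (g x)) μ :=
  integrable_exp_of_abs_le g.continuous.aestronglyMeasurable g.norm_coe_le_norm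

def clampExp (n : ℕ) (y : ℝ) : ℝ := max (min y (exp n)) (exp (-n))

lemma clampExp_pos (n : ℕ) (y : ℝ) : 0 < clampExp n y :=
  (exp_pos _).trans_le (le_max_right _ _)

lemma continuous_clampExp (n : ℕ) : Continuous (clampExp n) := by
  unfold clampExp; fun_prop

lemma abs_log_clampExp_le (n : ℕ) (y : ℝ) : |log (clampExp n y)| ≤ n := by
  have h_lo : exp (-n) ≤ clampExp n y := le_max_right _ _
  have h_hi : clampExp n y ≤ exp n :=
    max_le (min_le_right _ _) (exp_le_exp.2 (by linarith [n.cast_nonneg (α := ℝ)]))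
  rw [abs_le]
  constructor
  · simpa using log_le_log (exp_pos _) h_lo
  · simpa using log_le_log (clampExp_pos n y) h_hi

lemma mul_log_sub_add_one_nonneg {y t : ℝ} (hy : 0 ≤ y) (ht : 0 < t)
    (hyt : 0 ≤ (y - t) * (t - 1)) : 0 ≤ y * log t - t + 1 := by
  have h_log := mul_le_mul_of_nonneg_left (one_sub_inv_le_log_of_pos ht) hy
  have h_factor : y * (1 - t⁻¹) - t + 1 = (y - t) * (t - 1) / t := by field_simp; ring
  nlinarith [div_nonneg hyt ht.le]

lemma mul_log_clampExp_sub_add_one_nonneg (n : ℕ) {y : ℝ} (hy : 0 ≤ y) :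
    0 ≤ y * log (clampExp n y) - clampExp n y + 1 := by
  refine mul_log_sub_add_one_nonneg hy (clampExp_pos n y) ?_
  have h_lo : exp (-n) ≤ 1 := exp_le_one_iff.2 (by simp)
  have h_hi : 1 ≤ exp n := one_le_exp (by simp)
  unfold clampExp
  rcases le_total y (exp n) with h | h
  · rw [min_eq_left h]
    rcases le_total y (exp (-n)) with h' | h'
    · rw [max_eq_right h']; nlinarith
    · rw [max_eq_left h', sub_self, zero_mul]
  · rw [min_eq_right h, max_eq_left (h_lo.trans h_hi)]; nlinarith

lemma tendsto_mul_log_clampExp {y : ℝ} (hy : 0 ≤ y) :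
    Tendsto (fun n ↦ y * log (clampExp n y) - clampExp n y + 1) atTop (𝓝 (klFun y)) := by
  rcases hy.eq_or_lt with rfl | hy
  · have : Tendsto (fun n : ℕ ↦ exp (-n)) atTop (𝓝 0) :=
      tendsto_exp_atBot.comp (tendsto_neg_atTop_atBot.comp tendsto_natCast_atTop_atTop)
    have h_eq : ∀ n : ℕ, clampExp n 0 = exp (-n) := fun n ↦ by
      simp [clampExp, (exp_pos _).le]
    simpa [h_eq, klFun_zero, neg_add_eq_sub] using this.const_sub 1
  · refine tendsto_const_nhds.congr' ?_
    filter_upwards [eventually_ge_atTop ⌈|log y|⌉₊] with n hn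
    have hn : |log y| ≤ n := (Nat.le_ceil _).trans (Nat.cast_le.2 hn)
    have h_eq : clampExp n y = y := by
      rw [abs_le] at hn
      have h1 : y ≤ exp n := by rw [← exp_log hy]; exact exp_le_exp.2 hn.2
      have h2 : exp (-n) ≤ y := by rw [← exp_log hy]; exact exp_le_exp.2 hn.1
      rw [clampExp, min_eq_left h1, max_eq_left h2]
    rw [h_eq, klFun]
    ring

lemma integral_rnDeriv_mul_sub_exp_add_one_le_dvFunctional [SigmaFinite μ]
    [IsProbabilityMeasure ν] (hμν : μ ≪ ν) {φ : α → ℝ} (hφμ : Integrable φ μ)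
    (hφν : Integrable (fun x ↦ exp (φ x)) ν) :
    ∫ x, ((μ.rnDeriv ν x).toReal * φ x - exp (φ x) + 1) ∂ν ≤ dvFunctional μ ν φ := by
  have hfφ := (integrable_toReal_rnDeriv_mul_iff hμν).2 hφμ
  rw [integral_add (f := fun x ↦ (μ.rnDeriv ν x).toReal * φ x - exp (φ x)) (hfφ.sub hφν)
    (integrable_const 1), integral_sub hfφ hφν,
    integral_toReal_rnDeriv_mul hμν, dvFunctional]
  simp only [integral_const, probReal_univ, one_smul]
  linarith [log_le_sub_one_of_pos (integral_exp_pos hφν)]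

lemma klDiv_le_of_absolutelyContinuous [IsFiniteMeasure μ] [IsProbabilityMeasure ν]
    (hμν : μ ≪ ν) {S : ℝ≥0∞} (hS : ∀ (φ : α → ℝ) (C : ℝ), Measurable φ → (∀ x, |φ x| ≤ C) →
      ENNReal.ofReal (dvFunctional μ ν φ) ≤ S) :
    klDiv μ ν ≤ S := by
  set f : α → ℝ := fun x ↦ (μ.rnDeriv ν x).toReal
  have hf : Measurable f := (Measure.measurable_rnDeriv μ ν).ennreal_toReal
  set g : ℕ → α → ℝ := fun n x ↦ f x * log (clampExp n (f x)) - clampExp n (f x) + 1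
  have hg (n : ℕ) : Measurable (g n) := by
    have := (continuous_clampExp n).measurable.comp hf
    exact ((hf.mul this.log).sub this).add_const 1
  have h_int_le (n : ℕ) : ∫⁻ x, ENNReal.ofReal (g n x) ∂ν ≤ S := by
    have hφ : Measurable fun x ↦ log (clampExp n (f x)) :=
      ((continuous_clampExp n).measurable.comp hf).log
    have hφ_bdd x : |log (clampExp n (f x))| ≤ n := abs_log_clampExp_le n (f x)
    have hφμ : Integrable _ μ := .of_bound hφ.aestronglyMeasurable n (ae_of_all _ hφ_bdd)
    have hφν := integrable_exp_of_abs_le (μ := ν) hφ.aestronglyMeasurable hφ_bdd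
    have h_le := integral_rnDeriv_mul_sub_exp_add_one_le_dvFunctional hμν hφμ hφν
    simp only [exp_log (clampExp_pos _ _)] at h_le hφν
    rw [← ofReal_integral_eq_lintegral_ofReal (μ := ν)]
    · exact (ENNReal.ofReal_le_ofReal h_le).trans (hS _ n hφ hφ_bdd)
    · exact (((integrable_toReal_rnDeriv_mul_iff hμν).2 hφμ).sub hφν).add (integrable_const 1)
    · exact ae_of_all _ fun x ↦ mul_log_clampExp_sub_add_one_nonneg n ENNReal.toReal_nonneg
  calc klDiv μ ν = ∫⁻ x, ENNReal.ofReal (klFun (f x)) ∂ν := klDiv_eq_lintegral_klFun_of_ac hμν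
    _ = ∫⁻ x, liminf (fun n ↦ ENNReal.ofReal (g n x)) atTop ∂ν := by
        refine lintegral_congr fun x ↦ ?_
        exact ((ENNReal.continuous_ofReal.tendsto _).comp
          (tendsto_mul_log_clampExp ENNReal.toReal_nonneg)).liminf_eq.symm
    _ ≤ liminf (fun n ↦ ∫⁻ x, ENNReal.ofReal (g n x) ∂ν) atTop :=
        lintegral_liminf_le fun n ↦ (hg n).ennreal_ofReal
    _ ≤ S := liminf_le_of_frequently_le' (Frequently.of_forall h_int_le)

lemma eq_top_of_not_absolutelyContinuous [IsFiniteMeasure μ] [IsProbabilityMeasure ν]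
    (hμν : ¬ μ ≪ ν) {S : ℝ≥0∞} (hS : ∀ (φ : α → ℝ) (C : ℝ), Measurable φ → (∀ x, |φ x| ≤ C) →
      ENNReal.ofReal (dvFunctional μ ν φ) ≤ S) :
    S = ⊤ := by
  obtain ⟨s, hs, hνs, hμs⟩ : ∃ s, MeasurableSet s ∧ ν s = 0 ∧ μ s ≠ 0 := by
    contrapose! hμν
    exact Measure.AbsolutelyContinuous.mk hμν
  refine ENNReal.eq_top_of_forall_nnreal_le fun r ↦ ?_
  have hm : 0 < μ.real s := ENNReal.toReal_pos hμs (measure_ne_top _ _)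
  set c : ℝ := r / μ.real s
  have hc : 0 ≤ c := by positivity
  have h_bdd x : |s.indicator (fun _ ↦ c) x| ≤ c := by
    by_cases hx : x ∈ s <;> simp [hx, abs_of_nonneg hc, hc]
  have h_dv : dvFunctional μ ν (s.indicator fun _ ↦ c) = r := by
    have h_exp : (fun x ↦ exp (s.indicator (fun _ ↦ c) x)) =ᵐ[ν] fun _ ↦ 1 := by
      filter_upwards [measure_eq_zero_iff_ae_notMem.1 hνs] with x hx
      simp [hx]
    rw [dvFunctional, integral_indicator_const _ hs, integral_congr_ae h_exp]
    simp only [integral_const, probReal_univ, smul_eq_mul, mul_one, log_one, sub_zero, c]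
    field_simp
  simpa [h_dv] using hS _ c (measurable_const.indicator hs) h_bdd

lemma klDiv_le_of_forall_dvFunctional_le [IsFiniteMeasure μ] [IsProbabilityMeasure ν]
    {S : ℝ≥0∞} (hS : ∀ (φ : α → ℝ) (C : ℝ), Measurable φ → (∀ x, |φ x| ≤ C) →
      ENNReal.ofReal (dvFunctional μ ν φ) ≤ S) :
    klDiv μ ν ≤ S := by
  by_cases hμν : μ ≪ ν
  · exact klDiv_le_of_absolutelyContinuous hμν hS
  · rw [eq_top_of_not_absolutelyContinuous hμν hS]
    exact le_top

lemma tendsto_dvFunctional_of_ae_tendsto [IsFiniteMeasure μ] [IsFiniteMeasure ν] [NeZero ν]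
    {φ : ℕ → α → ℝ} {ψ : α → ℝ} {C : ℝ} (hφ : ∀ n, Measurable (φ n)) (hC : ∀ n x, |φ n x| ≤ C)
    (hμ : ∀ᵐ x ∂μ, Tendsto (fun n ↦ φ n x) atTop (𝓝 (ψ x)))
    (hν : ∀ᵐ x ∂ν, Tendsto (fun n ↦ φ n x) atTop (𝓝 (ψ x))) :
    Tendsto (fun n ↦ dvFunctional μ ν (φ n)) atTop (𝓝 (dvFunctional μ ν ψ)) := by
  have h_exp_le (n : ℕ) (x : α) : ‖exp (φ n x)‖ ≤ exp C := by
    simpa only [norm_eq_abs, abs_exp] using exp_le_exp.2 (le_of_abs_le (hC n x))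
  have h_int : Tendsto (fun n ↦ ∫ x, φ n x ∂μ) atTop (𝓝 (∫ x, ψ x ∂μ)) :=
    tendsto_integral_of_dominated_convergence (fun _ ↦ C) (fun n ↦ (hφ n).aestronglyMeasurable)
      (integrable_const C) (fun n ↦ ae_of_all _ (hC n)) hμ
  have h_exp : Tendsto (fun n ↦ ∫ x, exp (φ n x) ∂ν) atTop (𝓝 (∫ x, exp (ψ x) ∂ν)) :=
    tendsto_integral_of_dominated_convergence (fun _ ↦ exp C)
      (fun n ↦ (hφ n).exp.aestronglyMeasurable) (integrable_const _)
      (fun n ↦ ae_of_all _ (h_exp_le n)) (hν.mono fun x hx ↦ (continuous_exp.tendsto _).comp hx)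
  have hψν : Integrable (fun x ↦ exp (ψ x)) ν := by
    refine .of_bound (continuous_exp.comp_aestronglyMeasurable
      (aestronglyMeasurable_of_tendsto_ae atTop (fun n ↦ (hφ n).aestronglyMeasurable) hν))
      (exp C) (hν.mono fun x hx ↦ ?_)
    exact le_of_tendsto' ((continuous_norm.tendsto _).comp ((continuous_exp.tendsto _).comp hx))
      fun n ↦ h_exp_le n x
  exact h_int.sub ((continuousAt_log (integral_exp_pos hψν).ne').tendsto.comp h_exp)

section Approximation

variable {X : Type*} [TopologicalSpace X] [MeasurableSpace X] [BorelSpace X]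

lemma exists_seq_boundedContinuous_ae_tendsto [NormalSpace X] {E : Type*} [NormedAddCommGroup E]
    [NormedSpace ℝ E] [SecondCountableTopologyEither X E] {ρ : Measure X} [ρ.WeaklyRegular]
    {φ : X → E} (hφ : Integrable φ ρ) :
    ∃ g : ℕ → X →ᵇ E, ∀ᵐ x ∂ρ, Tendsto (fun n ↦ g n x) atTop (𝓝 (φ x)) := by
  have h_approx (n : ℕ) : ∃ g : X →ᵇ E, eLpNorm (φ - ⇑g) 1 ρ ≤ (n : ℝ≥0∞)⁻¹ := by
    obtain ⟨g, hg, -⟩ := (memLp_one_iff_integrable.2 hφ).exists_boundedContinuous_eLpNorm_sub_le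
      ENNReal.one_ne_top (ENNReal.inv_ne_zero.2 (ENNReal.natCast_ne_top n))
    exact ⟨g, hg⟩
  choose g hg using h_approx
  have h_meas : TendstoInMeasure ρ (fun n ↦ ⇑(g n)) atTop φ := by
    refine tendstoInMeasure_of_tendsto_eLpNorm one_ne_zero
      (fun n ↦ (g n).continuous.aestronglyMeasurable) hφ.aestronglyMeasurable ?_
    refine tendsto_of_tendsto_of_tendsto_of_le_of_le tendsto_const_nhds
      ENNReal.tendsto_inv_nat_nhds_zero (fun _ ↦ zero_le) fun n ↦ ?_
    rw [eLpNorm_sub_comm]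
    exact hg n
  obtain ⟨ns, -, h_ae⟩ := h_meas.exists_seq_tendsto_ae
  exact ⟨g ∘ ns, h_ae⟩

lemma ofReal_dvFunctional_le_iSup [TopologicalSpace.PseudoMetrizableSpace X]
    {μ ν : Measure X} [IsFiniteMeasure μ] [IsFiniteMeasure ν] [NeZero ν]
    {φ : X → ℝ} (hφ : Measurable φ) {C : ℝ} (hC : ∀ x, |φ x| ≤ C) :
    ENNReal.ofReal (dvFunctional μ ν φ) ≤
      ⨆ g : X →ᵇ ℝ, ENNReal.ofReal (dvFunctional μ ν g) := by
  obtain ⟨g, hg⟩ := exists_seq_boundedContinuous_ae_tendsto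
    (Integrable.of_bound (μ := μ + ν) hφ.aestronglyMeasurable C (ae_of_all _ hC))
  let clamp (f : X →ᵇ ℝ) : X →ᵇ ℝ :=
    f ⊓ BoundedContinuousFunction.const X C ⊔ BoundedContinuousFunction.const X (-C)
  have h_clamp (n : ℕ) (x : X) : |clamp (g n) x| ≤ C := by
    have hC0 : 0 ≤ C := (abs_nonneg _).trans (hC x)
    exact abs_le.2 ⟨le_max_right _ _, max_le (min_le_right _ _) (neg_le_self hC0)⟩
  have h_tendsto : ∀ᵐ x ∂(μ + ν), Tendsto (fun n ↦ clamp (g n) x) atTop (𝓝 (φ x)) := by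
    filter_upwards [hg] with x hx
    have h := (hx.min (tendsto_const_nhds (x := C))).max (tendsto_const_nhds (x := -C))
    rwa [min_eq_left (le_of_abs_le (hC x)), max_eq_left (neg_le_of_abs_le (hC x))] at h
  rw [ae_add_measure_iff] at h_tendsto
  exact le_of_tendsto' ((ENNReal.continuous_ofReal.tendsto _).comp
    (tendsto_dvFunctional_of_ae_tendsto (fun n ↦ (clamp (g n)).continuous.measurable) h_clamp
      h_tendsto.1 h_tendsto.2))
    fun n ↦ le_iSup (fun f : X →ᵇ ℝ ↦ ENNReal.ofReal (dvFunctional μ ν f)) (clamp (g n))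

end Approximation

lemma iSup_dvFunctional_eq_iSup_normalized {X : Type*} [TopologicalSpace X] [MeasurableSpace X]
    [OpensMeasurableSpace X] (μ ν : Measure X) [IsProbabilityMeasure μ] [IsFiniteMeasure ν]
    [NeZero ν] :
    ⨆ g : X →ᵇ ℝ, ENNReal.ofReal (dvFunctional μ ν g) =
      ⨆ g : {g : X →ᵇ ℝ // ∫ x, exp (g x) ∂ν = 1}, ENNReal.ofReal (dvFunctional μ ν g) := by
  refine le_antisymm (iSup_le fun g ↦ ?_) (iSup_le fun g ↦ le_iSup_of_le g.1 le_rfl)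
  have hgν := integrable_exp_boundedContinuousFunction (μ := ν) g
  let g₁ : X →ᵇ ℝ := g - BoundedContinuousFunction.const X (log (∫ x, exp (g x) ∂ν))
  refine le_iSup_of_le ⟨g₁, integral_exp_sub_log_integral_exp hgν⟩ (le_of_eq ?_)
  exact congrArg ENNReal.ofReal (dvFunctional_sub_const (g.integrable μ) hgν _).symm

lemma klDiv_eq_iSup_dvFunctional {X : Type*} [TopologicalSpace X]
    [TopologicalSpace.PseudoMetrizableSpace X] [MeasurableSpace X] [BorelSpace X]
    (μ ν : Measure X) [IsProbabilityMeasure μ] [IsProbabilityMeasure ν] :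
    klDiv μ ν = ⨆ g : X →ᵇ ℝ, ENNReal.ofReal (dvFunctional μ ν g) :=
  le_antisymm
    (klDiv_le_of_forall_dvFunctional_le fun _ _ hφ hC ↦ ofReal_dvFunctional_le_iSup hφ hC)
    (iSup_le fun g ↦ ofReal_dvFunctional_le_klDiv (g.integrable μ)
      (integrable_exp_boundedContinuousFunction g))

end DonskerVaradhan

theorem stmt12_general (X : Type*) [MetricSpace X] [MeasurableSpace X] [BorelSpace X]
    (μ ν : Measure X) (hμ : IsProbabilityMeasure μ) (hν : IsProbabilityMeasure ν) :
    relEntropy μ ν =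
      (⨆ φ : BoundedContinuousFunction X ℝ,
        ENNReal.ofReal (∫ x, φ x ∂μ - Real.log (∫ x, Real.exp (φ x) ∂ν))) ∧
    relEntropy μ ν =
      (⨆ φ : {φ : BoundedContinuousFunction X ℝ // ∫ x, Real.exp (φ x) ∂ν = 1},
        ENNReal.ofReal
          (∫ x, (φ : BoundedContinuousFunction X ℝ) x ∂μ -
            Real.log (∫ x, Real.exp ((φ : BoundedContinuousFunction X ℝ) x) ∂ν))) := by
  rw [DonskerVaradhan.relEntropy_eq_klDiv]
  exact ⟨DonskerVaradhan.klDiv_eq_iSup_dvFunctional μ ν,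
    (DonskerVaradhan.klDiv_eq_iSup_dvFunctional μ ν).trans
      (DonskerVaradhan.iSup_dvFunctional_eq_iSup_normalized μ ν)⟩

/-- the Legendre (Donsker–Varadhan) representation of relative entropy. -/
theorem stmt12 (X : Type*) [MetricSpace X] [CompleteSpace X] [LocallyCompactSpace X]
    [TopologicalSpace.SeparableSpace X] [MeasurableSpace X] [BorelSpace X]
    (μ ν : Measure X) (hμ : IsProbabilityMeasure μ) (hν : IsProbabilityMeasure ν) :
    relEntropy μ ν =
      (⨆ φ : BoundedContinuousFunction X ℝ,
        ENNReal.ofReal (∫ x, φ x ∂μ - Real.log (∫ x, Real.exp (φ x) ∂ν))) ∧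
    relEntropy μ ν =
      (⨆ φ : {φ : BoundedContinuousFunction X ℝ // ∫ x, Real.exp (φ x) ∂ν = 1},
        ENNReal.ofReal
          (∫ x, (φ : BoundedContinuousFunction X ℝ) x ∂μ -
            Real.log (∫ x, Real.exp ((φ : BoundedContinuousFunction X ℝ) x) ∂ν))) :=
  stmt12_general X μ ν hμ hν

end
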